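/- For 0 < q < 1 and α, λ > -1, evaluating the q-beta type integral at a = 0 gives ∫_0^x t^{p-1}(x^p-(qt)^p)_{q^p}^(α-1) t^{pλ} d_q t = (1/[p]_q) B_{q^p}(α, λ+1) x^{p(α+λ)}, where B_q(s,t) = Γ_q(s)Γ_q(t)/Γ_q(s+t) is the q-beta function. -/

import Mathlib

noncomputable section

open scoped Topology

/-- q-shifted factorial `(a;q)_∞ = ∏_{j≥0} (1 - a q^j)`. -/
def qPochInf (a q : ℝ) : ℝ := ∏' j : ℕ, (1 - a * q ^ j)

/-- q-number `[a]_q = (1-q^a)/(1-q)`. -/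
def qNum (a q : ℝ) : ℝ := (1 - q ^ a) / (1 - q)

/-- generalized q-exponent `(X - Y)_{q'}^{(α)} = X^α (Y/X;q')_∞ / (q'^α Y/X;q')_∞`. -/
def qExpGen (q' α X Y : ℝ) : ℝ := X ^ α * qPochInf (Y / X) q' / qPochInf (q' ^ α * (Y / X)) q'

/-- `(x^p - y^p)_{q^p}^{(α)}`. -/
def genExp (p q α x y : ℝ) : ℝ := qExpGen (q ^ p) α (x ^ p) (y ^ p)

/-- Jackson q-integral `∫_0^b f d_q t = (1-q) b ∑_{i≥0} q^i f(q^i b)`. -/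
def jackson0 (q b : ℝ) (f : ℝ → ℝ) : ℝ := (1 - q) * b * ∑' i : ℕ, q ^ i * f (q ^ i * b)

/-- Jackson q-integral `∫_a^b f d_q t`. -/
def jacksonI (q a b : ℝ) (f : ℝ → ℝ) : ℝ := jackson0 q b f - jackson0 q a f

/-- q-Gamma function `Γ_q(t) = (q;q)_∞ (1-q)^{1-t} / (q^t;q)_∞`. -/
def qGammaF (q t : ℝ) : ℝ := qPochInf q q * (1 - q) ^ (1 - t) / qPochInf (q ^ t) q

/-- q-derivative `D_q f(x) = (f(x)-f(qx))/((1-q)x)`. -/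
def qDeriv (q : ℝ) (f : ℝ → ℝ) (x : ℝ) : ℝ := (f x - f (q * x)) / ((1 - q) * x)

/-- generalized q-fractional integral `J_{a+,p,q}^β`. -/
def Jfrac (q p β a : ℝ) (g : ℝ → ℝ) (x : ℝ) : ℝ :=
  qNum p q ^ (1 - β) / qGammaF (q ^ p) β *
    jacksonI q a x (fun w => w ^ (p - 1) * g w * genExp p q (β - 1) x (w * q))

/-- Riemann–Liouville type generalized q-fractional derivative `D_{a+,p,q}^α`. -/
def RLfrac (q p α a : ℝ) (f : ℝ → ℝ) (x : ℝ) : ℝ :=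
  qNum p q ^ α / qGammaF (q ^ p) (1 - α) *
    (x ^ (1 - p) *
      qDeriv q
        (fun t => jacksonI q a t (fun w => w ^ (p - 1) * f w * genExp p q (-α) t (w * q))) x)

/-- Caputo type generalized q-fractional derivative `ᶜD_{a+,p,q}^α f = D_{a+,p,q}^α (f - f a)`. -/
def caputoFrac (q p α a : ℝ) (f : ℝ → ℝ) (x : ℝ) : ℝ :=
  RLfrac q p α a (fun t => f t - f a) x

/-- successive approximations: `succApprox 0 = ζ` (i.e. φ₁), `succApprox (n+1) = φ_{n+2}`. -/
def succApprox (q p α a ζ : ℝ) (f : ℝ → ℝ → ℝ) : ℕ → ℝ → ℝ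
  | 0 => fun _ => ζ
  | n + 1 => fun t => ζ +
      qNum p q ^ (1 - α) / qGammaF (q ^ p) α *
        jacksonI q a t
          (fun w => w ^ (p - 1) * f w (succApprox q p α a ζ f n w) * genExp p q (α - 1) t (w * q))

/-- q-Beta function `B_q(s,t) = Γ_q(s)Γ_q(t)/Γ_q(s+t)`. -/
def qBetaF (q s t : ℝ) : ℝ := qGammaF q s * qGammaF q t / qGammaF q (s + t)

/-!
Write `Q = q ^ p`. At the Jackson nodes `t = q ^ i * x` the generalized q-exponent is a ratio of
infinite q-Pochhammer symbols, so the `i`-th term of the Jackson sum is a constant times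
`(Q^α;Q)_i / (Q;Q)_i * (Q^(l+1))^i`. Summing with the q-binomial theorem
`∑ (A;Q)_i / (Q;Q)_i * z^i = (A z;Q)_∞ / (z;Q)_∞` produces exactly the q-beta function.
The q-binomial theorem itself comes from the functional equation
`(1 - z) φ(z) = (1 - A z) φ(Q z)` of the series, iterated `N` times, together with
`φ(z Q^N) → φ(0) = 1` (dominated convergence).
-/

open Real Finset Filter

/-- The finite q-Pochhammer symbol `(a;Q)_n`. -/
def qPoch (a Q : ℝ) (n : ℕ) : ℝ := ∏ j ∈ range n, (1 - a * Q ^ j)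

section QPochhammer

variable {a Q : ℝ}

lemma one_sub_mul_pow_pos (ha0 : 0 ≤ a) (ha1 : a < 1) (hQ0 : 0 ≤ Q) (hQ1 : Q ≤ 1) (j : ℕ) :
    0 < 1 - a * Q ^ j := by
  nlinarith [pow_le_one₀ hQ0 hQ1 (n := j), pow_nonneg hQ0 j]

lemma summable_log_one_sub_mul_pow (hQ0 : 0 ≤ Q) (hQ1 : Q < 1) :
    Summable fun j : ℕ => log (1 - a * Q ^ j) := by
  simpa only [sub_eq_add_neg] using
    Real.summable_log_one_add_of_summable ((summable_geometric_of_lt_one hQ0 hQ1).mul_left a).neg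

lemma qPochInf_hasProd (ha0 : 0 ≤ a) (ha1 : a < 1) (hQ0 : 0 ≤ Q) (hQ1 : Q < 1) :
    HasProd (fun j : ℕ => 1 - a * Q ^ j) (qPochInf a Q) :=
  (Real.multipliable_of_summable_log (one_sub_mul_pow_pos ha0 ha1 hQ0 hQ1.le)
    (summable_log_one_sub_mul_pow hQ0 hQ1)).hasProd

lemma qPochInf_pos (ha0 : 0 ≤ a) (ha1 : a < 1) (hQ0 : 0 ≤ Q) (hQ1 : Q < 1) :
    0 < qPochInf a Q := by
  rw [qPochInf, ← Real.rexp_tsum_eq_tprod (one_sub_mul_pow_pos ha0 ha1 hQ0 hQ1.le)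
    (summable_log_one_sub_mul_pow hQ0 hQ1)]
  exact exp_pos _

lemma qPoch_le_one (ha0 : 0 ≤ a) (ha1 : a < 1) (hQ0 : 0 ≤ Q) (hQ1 : Q ≤ 1) (n : ℕ) :
    qPoch a Q n ≤ 1 :=
  prod_le_one (fun j _ => (one_sub_mul_pow_pos ha0 ha1 hQ0 hQ1 j).le)
    fun j _ => by nlinarith [pow_nonneg hQ0 j]

lemma tendsto_qPoch (ha0 : 0 ≤ a) (ha1 : a < 1) (hQ0 : 0 ≤ Q) (hQ1 : Q < 1) :
    Tendsto (qPoch a Q) atTop (𝓝 (qPochInf a Q)) :=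
  (qPochInf_hasProd ha0 ha1 hQ0 hQ1).tendsto_prod_nat

lemma qPochInf_le_one (ha0 : 0 ≤ a) (ha1 : a < 1) (hQ0 : 0 ≤ Q) (hQ1 : Q < 1) :
    qPochInf a Q ≤ 1 :=
  le_of_tendsto' (tendsto_qPoch ha0 ha1 hQ0 hQ1) (qPoch_le_one ha0 ha1 hQ0 hQ1.le)

lemma mul_pow_lt_one (ha0 : 0 ≤ a) (ha1 : a < 1) (hQ0 : 0 ≤ Q) (hQ1 : Q ≤ 1) (n : ℕ) :
    a * Q ^ n < 1 := by
  nlinarith [pow_le_one₀ hQ0 hQ1 (n := n), pow_nonneg hQ0 n]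

lemma qPoch_mul_qPochInf (ha0 : 0 ≤ a) (ha1 : a < 1) (hQ0 : 0 ≤ Q) (hQ1 : Q < 1) (n : ℕ) :
    qPoch a Q n * qPochInf (a * Q ^ n) Q = qPochInf a Q := by
  have hshift : HasProd (fun j => 1 - a * Q ^ (j + n)) (qPochInf (a * Q ^ n) Q) := by
    simpa only [pow_add, mul_comm (Q ^ _) (Q ^ n), mul_assoc] using
      qPochInf_hasProd (by positivity) (mul_pow_lt_one ha0 ha1 hQ0 hQ1.le n) hQ0 hQ1
  rw [← hshift.tprod_eq]
  exact hshift.multipliable.prod_mul_tprod_nat_mul'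

lemma qPochInf_le_qPoch (ha0 : 0 ≤ a) (ha1 : a < 1) (hQ0 : 0 ≤ Q) (hQ1 : Q < 1) (n : ℕ) :
    qPochInf a Q ≤ qPoch a Q n := by
  have hpos : 0 ≤ qPoch a Q n := prod_nonneg fun j _ => (one_sub_mul_pow_pos ha0 ha1 hQ0 hQ1.le j).le
  rw [← qPoch_mul_qPochInf ha0 ha1 hQ0 hQ1 n]
  exact mul_le_of_le_one_right hpos
    (qPochInf_le_one (by positivity) (mul_pow_lt_one ha0 ha1 hQ0 hQ1.le n) hQ0 hQ1)

lemma qBetaF_eq (hQ0 : 0 < Q) (hQ1 : Q < 1) (s t : ℝ) :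
    qBetaF Q s t = (1 - Q) * qPochInf Q Q * qPochInf (Q ^ (s + t)) Q
      / (qPochInf (Q ^ s) Q * qPochInf (Q ^ t) Q) := by
  have h1Q : 0 < 1 - Q := by linarith
  have hP := (qPochInf_pos hQ0.le hQ1 hQ0.le hQ1).ne'
  have hpow : (1 - Q) ^ (1 - s) * (1 - Q) ^ (1 - t) = (1 - Q) * (1 - Q) ^ (1 - (s + t)) := by
    rw [← rpow_add h1Q, mul_comm, ← rpow_add_one h1Q.ne']
    ring_nf
  have hpow_ne := (rpow_pos_of_pos h1Q (1 - (s + t))).ne'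
  rw [qBetaF, qGammaF, qGammaF, qGammaF]
  field_simp
  rw [hpow]

end QPochhammer

def qBinomCoeff (A Q : ℝ) (i : ℕ) : ℝ := qPoch A Q i / qPoch Q Q i

def qBinomSeries (A Q z : ℝ) : ℝ := ∑' i, qBinomCoeff A Q i * z ^ i

section QBinomial

variable {A Q z : ℝ}

lemma qBinomCoeff_succ_mul (hQ0 : 0 ≤ Q) (hQ1 : Q < 1) (i : ℕ) :
    qBinomCoeff A Q (i + 1) * (1 - Q ^ (i + 1)) = qBinomCoeff A Q i * (1 - A * Q ^ i) := by
  have hfactor : 1 - Q * Q ^ i ≠ 0 := (one_sub_mul_pow_pos hQ0 hQ1 hQ0 hQ1.le i).ne'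
  rw [qBinomCoeff, qBinomCoeff, qPoch, qPoch, prod_range_succ, prod_range_succ, ← qPoch, ← qPoch,
    pow_succ', div_mul_eq_mul_div, mul_div_mul_right _ _ hfactor, div_mul_eq_mul_div]

lemma qBinomCoeff_nonneg (hA0 : 0 ≤ A) (hA1 : A < 1) (hQ0 : 0 ≤ Q) (hQ1 : Q < 1) (i : ℕ) :
    0 ≤ qBinomCoeff A Q i :=
  div_nonneg (prod_nonneg fun j _ => (one_sub_mul_pow_pos hA0 hA1 hQ0 hQ1.le j).le)
    (prod_nonneg fun j _ => (one_sub_mul_pow_pos hQ0 hQ1 hQ0 hQ1.le j).le)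

lemma qBinomCoeff_le (hA0 : 0 ≤ A) (hA1 : A < 1) (hQ0 : 0 ≤ Q) (hQ1 : Q < 1) (i : ℕ) :
    qBinomCoeff A Q i ≤ (qPochInf Q Q)⁻¹ := by
  rw [← one_div]
  exact div_le_div₀ zero_le_one (qPoch_le_one hA0 hA1 hQ0 hQ1.le i)
    (qPochInf_pos hQ0 hQ1 hQ0 hQ1) (qPochInf_le_qPoch hQ0 hQ1 hQ0 hQ1 i)

lemma summable_qBinomCoeff_mul_pow (hA0 : 0 ≤ A) (hA1 : A < 1) (hQ0 : 0 ≤ Q) (hQ1 : Q < 1)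
    (hz0 : 0 ≤ z) (hz1 : z < 1) : Summable fun i => qBinomCoeff A Q i * z ^ i :=
  .of_nonneg_of_le (fun i => mul_nonneg (qBinomCoeff_nonneg hA0 hA1 hQ0 hQ1 i) (by positivity))
    (fun i => mul_le_mul_of_nonneg_right (qBinomCoeff_le hA0 hA1 hQ0 hQ1 i) (by positivity))
    ((summable_geometric_of_lt_one hz0 hz1).mul_left _)

lemma one_sub_mul_qBinomSeries (hA0 : 0 ≤ A) (hA1 : A < 1) (hQ0 : 0 ≤ Q) (hQ1 : Q < 1)
    (hz0 : 0 ≤ z) (hz1 : z < 1) :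
    (1 - z) * qBinomSeries A Q z = (1 - A * z) * qBinomSeries A Q (Q * z) := by
  have hf := summable_qBinomCoeff_mul_pow hA0 hA1 hQ0 hQ1 hz0 hz1
  have hg := summable_qBinomCoeff_mul_pow (z := Q * z) hA0 hA1 hQ0 hQ1 (by positivity)
    (by nlinarith)
  have key : ∑' i, (qBinomCoeff A Q i * z ^ i - qBinomCoeff A Q i * (Q * z) ^ i)
      = ∑' i, (z * (qBinomCoeff A Q i * z ^ i) - A * z * (qBinomCoeff A Q i * (Q * z) ^ i)) := by
    rw [(hf.sub hg).tsum_eq_zero_add]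
    simp only [pow_zero, mul_one, sub_self, zero_add]
    refine tsum_congr fun i => ?_
    rw [mul_pow, mul_pow]
    linear_combination z ^ (i + 1) * qBinomCoeff_succ_mul (A := A) hQ0 hQ1 i
  rw [hf.tsum_sub hg, (hf.mul_left z).tsum_sub (hg.mul_left (A * z)),
    tsum_mul_left, tsum_mul_left] at key
  simp only [qBinomSeries]
  linarith

lemma qPoch_mul_qBinomSeries (hA0 : 0 ≤ A) (hA1 : A < 1) (hQ0 : 0 ≤ Q) (hQ1 : Q < 1)
    (hz0 : 0 ≤ z) (hz1 : z < 1) (N : ℕ) :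
    qPoch z Q N * qBinomSeries A Q z = qPoch (A * z) Q N * qBinomSeries A Q (z * Q ^ N) := by
  induction N with
  | zero => simp [qPoch]
  | succ N ih =>
    have hstep := one_sub_mul_qBinomSeries hA0 hA1 hQ0 hQ1 (z := z * Q ^ N) (by positivity)
      (mul_pow_lt_one hz0 hz1 hQ0 hQ1.le N)
    rw [show Q * (z * Q ^ N) = z * Q ^ (N + 1) by ring] at hstep
    simp only [qPoch, prod_range_succ] at ih ⊢
    linear_combination (1 - z * Q ^ N) * ih + (∏ j ∈ range N, (1 - A * z * Q ^ j)) * hstep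

lemma tendsto_qBinomSeries_mul_pow (hA0 : 0 ≤ A) (hA1 : A < 1) (hQ0 : 0 ≤ Q) (hQ1 : Q < 1)
    (hz0 : 0 ≤ z) (hz1 : z < 1) :
    Tendsto (fun N : ℕ => qBinomSeries A Q (z * Q ^ N)) atTop (𝓝 1) := by
  have hlim : Tendsto (fun N : ℕ => z * Q ^ N) atTop (𝓝 0) := by
    simpa using (tendsto_pow_atTop_nhds_zero_of_lt_one hQ0 hQ1).const_mul z
  have hdom := tendsto_tsum_of_dominated_convergence
    (f := fun N i => qBinomCoeff A Q i * (z * Q ^ N) ^ i)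
    (summable_qBinomCoeff_mul_pow hA0 hA1 hQ0 hQ1 hz0 hz1)
    (fun i => ((hlim.pow i).const_mul (qBinomCoeff A Q i)))
    (.of_forall fun N i => by
      rw [norm_mul, norm_pow, Real.norm_of_nonneg (qBinomCoeff_nonneg hA0 hA1 hQ0 hQ1 i),
        Real.norm_of_nonneg (by positivity)]
      exact mul_le_mul_of_nonneg_left (pow_le_pow_left₀ (by positivity)
        (mul_le_of_le_one_right hz0 (pow_le_one₀ hQ0 hQ1.le)) i)
        (qBinomCoeff_nonneg hA0 hA1 hQ0 hQ1 i))
  have hsum_zero : ∑' i, qBinomCoeff A Q i * (0 : ℝ) ^ i = 1 := by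
    rw [tsum_eq_single 0 fun i hi => by simp [hi]]
    simp [qBinomCoeff, qPoch]
  rwa [hsum_zero] at hdom

theorem qBinomSeries_eq (hA0 : 0 ≤ A) (hA1 : A < 1) (hQ0 : 0 ≤ Q) (hQ1 : Q < 1)
    (hz0 : 0 ≤ z) (hz1 : z < 1) :
    qBinomSeries A Q z = qPochInf (A * z) Q / qPochInf z Q := by
  have hAz1 : A * z < 1 := by nlinarith
  have hlhs := ((tendsto_qPoch hz0 hz1 hQ0 hQ1).mul_const (qBinomSeries A Q z)).congr
    (qPoch_mul_qBinomSeries hA0 hA1 hQ0 hQ1 hz0 hz1)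
  have hrhs := (tendsto_qPoch (by positivity) hAz1 hQ0 hQ1).mul
    (tendsto_qBinomSeries_mul_pow hA0 hA1 hQ0 hQ1 hz0 hz1)
  rw [eq_div_iff (qPochInf_pos hz0 hz1 hQ0 hQ1).ne', mul_comm, ← mul_one (qPochInf (A * z) Q)]
  exact tendsto_nhds_unique hlhs hrhs

lemma qPochInf_mul_pow_div (hA0 : 0 ≤ A) (hA1 : A < 1) (hQ0 : 0 ≤ Q) (hQ1 : Q < 1) (i : ℕ) :
    qPochInf (Q * Q ^ i) Q / qPochInf (A * Q ^ i) Q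
      = qPochInf Q Q / qPochInf A Q * qBinomCoeff A Q i := by
  have hQ := prod_pos fun j (_ : j ∈ range i) => one_sub_mul_pow_pos hQ0 hQ1 hQ0 hQ1.le j
  have hA := prod_pos fun j (_ : j ∈ range i) => one_sub_mul_pow_pos hA0 hA1 hQ0 hQ1.le j
  rw [← qPoch_mul_qPochInf hQ0 hQ1 hQ0 hQ1 i, ← qPoch_mul_qPochInf hA0 hA1 hQ0 hQ1 i, qBinomCoeff]
  simp only [qPoch] at *
  field_simp

end QBinomial

lemma genExp_geometric {p q x : ℝ} (hq0 : 0 < q) (hx : 0 < x) (β : ℝ) (i : ℕ) :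
    genExp p q β x (q ^ (i + 1) * x) = x ^ (p * β) * qPochInf ((q ^ p) ^ (i + 1)) (q ^ p)
      / qPochInf ((q ^ p) ^ β * (q ^ p) ^ (i + 1)) (q ^ p) := by
  have hy : (q ^ (i + 1) * x) ^ p / x ^ p = (q ^ p) ^ (i + 1) := by
    rw [mul_rpow (by positivity) hx.le, rpow_pow_comm hq0.le,
      mul_div_cancel_right₀ _ (rpow_pos_of_pos hx p).ne']
  rw [genExp, qExpGen, hy, ← rpow_mul hx.le]

lemma jackson_term_eq {q p α l x : ℝ} (hq0 : 0 < q) (hq1 : q < 1) (hp : 0 < p) (hα : 0 < α)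
    (hx : 0 < x) (i : ℕ) :
    q ^ i * ((q ^ i * x) ^ (p - 1) * genExp p q (α - 1) x (q * (q ^ i * x)) * (q ^ i * x) ^ (p * l))
      = x ^ (p * (α + l) - 1) * (qPochInf (q ^ p) (q ^ p) / qPochInf ((q ^ p) ^ α) (q ^ p)) *
        (qBinomCoeff ((q ^ p) ^ α) (q ^ p) i * ((q ^ p) ^ (l + 1)) ^ i) := by
  have hQ0 : 0 < q ^ p := rpow_pos_of_pos hq0 p
  have hQ1 : q ^ p < 1 := rpow_lt_one hq0.le hq1 hp
  have hshift : (q ^ p) ^ (α - 1) * (q ^ p) ^ (i + 1) = (q ^ p) ^ α * (q ^ p) ^ i := by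
    rw [pow_succ', ← mul_assoc, ← rpow_add_one hQ0.ne', sub_add_cancel]
  have hbase : q * q ^ (p - 1) * q ^ (p * l) = (q ^ p) ^ (l + 1) := by
    nth_rw 1 [← rpow_one q]
    rw [← rpow_add hq0, ← rpow_add hq0, ← rpow_mul hq0.le]
    ring_nf
  have hxpow : x ^ (p - 1) * x ^ (p * (α - 1)) * x ^ (p * l) = x ^ (p * (α + l) - 1) := by
    rw [← rpow_add hx, ← rpow_add hx]
    ring_nf
  rw [← mul_assoc q, ← pow_succ', genExp_geometric hq0 hx, hshift, pow_succ', mul_div_assoc,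
    qPochInf_mul_pow_div (rpow_nonneg hQ0.le α) (rpow_lt_one hQ0.le hQ1 hα) hQ0.le hQ1,
    mul_rpow (by positivity) hx.le, mul_rpow (by positivity) hx.le, ← rpow_pow_comm hq0.le,
    ← rpow_pow_comm hq0.le, ← hbase, ← hxpow, mul_pow, mul_pow]
  ring

theorem stmt19 (q p α l x : ℝ) (hq0 : 0 < q) (hq1 : q < 1) (hp : 0 < p)
    (hα : 0 < α) (hl : -1 < l) (hx : 0 < x) :
    jackson0 q x (fun t => t ^ (p - 1) * genExp p q (α - 1) x (q * t) * t ^ (p * l)) =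
      1 / qNum p q * qBetaF (q ^ p) α (l + 1) * x ^ (p * (α + l)) := by
  have hQ0 : 0 < q ^ p := rpow_pos_of_pos hq0 p
  have hQ1 : q ^ p < 1 := rpow_lt_one hq0.le hq1 hp
  have hA1 : (q ^ p) ^ α < 1 := rpow_lt_one hQ0.le hQ1 hα
  have hz1 : (q ^ p) ^ (l + 1) < 1 := rpow_lt_one hQ0.le hQ1 (by linarith)
  have hsum : ∑' i : ℕ, q ^ i * ((q ^ i * x) ^ (p - 1) *
        genExp p q (α - 1) x (q * (q ^ i * x)) * (q ^ i * x) ^ (p * l))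
      = x ^ (p * (α + l) - 1) * (qPochInf (q ^ p) (q ^ p) / qPochInf ((q ^ p) ^ α) (q ^ p)) *
        qBinomSeries ((q ^ p) ^ α) (q ^ p) ((q ^ p) ^ (l + 1)) := by
    rw [qBinomSeries, ← tsum_mul_left]
    exact tsum_congr (jackson_term_eq hq0 hq1 hp hα hx)
  have hxpow : x * x ^ (p * (α + l) - 1) = x ^ (p * (α + l)) := by
    rw [mul_comm, ← rpow_add_one hx.ne', sub_add_cancel]
  have h1Q : 1 - q ^ p ≠ 0 := by linarith
  have hPA := qPochInf_pos (by positivity) hA1 hQ0.le hQ1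
  have hPz := qPochInf_pos (by positivity) hz1 hQ0.le hQ1
  rw [jackson0, hsum, qBinomSeries_eq (by positivity) hA1 hQ0.le hQ1 (by positivity) hz1,
    ← rpow_add hQ0, qBetaF_eq hQ0 hQ1, qNum, ← hxpow]
  field_simp
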